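/- Consider the two-dimensional retarded system ż₁(t) = z₂(t), ż₂(t) = z₂(t−1) + u(t), i.e. ż(t) = A₁ z(t−1) + A₀ z(t) + b u(t) with A₁ = [[0,0],[0,1]], A₀ = [[0,1],[0,0]], b = (0,1)ᵀ. Then: (i) for all row vectors p₋₁, p₁ ∈ ℝ^{1×2}, det((A₁ + b p₁) + λ·(b p₋₁)) = 0 for every λ ∈ ℂ (the closed-loop pencil is identically singular, so the system is not completable); yet (ii) there exists T > 0 such that for every y ∈ ℝ² and z₀ ∈ L²((−1,0); ℝ²) there exist u ∈ L²(0,T) and a solution z of the system with initial data (y, z₀) satisfying z(t) = 0 for all t ∈ [T−1, T]. -/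

import Mathlib

open MeasureTheory Set Matrix

noncomputable section

abbrev R2 := EuclideanSpace ℝ (Fin 2)

/-- `A₁ = [[0,0],[0,1]]` -/
def A1 : Matrix (Fin 2) (Fin 2) ℝ := !![0, 0; 0, 1]

/-- `A₀ = [[0,1],[0,0]]` -/
def A0 : Matrix (Fin 2) (Fin 2) ℝ := !![0, 1; 0, 0]

/-- `b = (0,1)ᵀ` -/
def bv : Fin 2 → ℝ := ![0, 1]

/-- the right-hand side `A₁ z(t-1) + A₀ z(t) + b u(t)` -/
def rhs (u : ℝ → ℝ) (z : ℝ → R2) (t : ℝ) : R2 :=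
  WithLp.toLp 2 (fun i => (A1 *ᵥ (fun j => z (t - 1) j)) i + (A0 *ᵥ (fun j => z t j)) i + u t * bv i)

/-- `z` is a solution on `[0,T]` of `ż(t) = A₁ z(t-1) + A₀ z(t) + b u(t)` with initial data
`(y, z₀)`; absolute continuity and the a.e. differential equation are expressed in integral
form. -/
def IsSolution (T : ℝ) (y : R2) (z0 : ℝ → R2) (u : ℝ → ℝ) (z : ℝ → R2) : Prop :=
  (∀ᵐ t ∂(volume.restrict (Ioo (-1:ℝ) 0)), z t = z0 t) ∧
  IntervalIntegrable (rhs u z) volume 0 T ∧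
  ∀ t ∈ Icc (0:ℝ) T, z t = y + ∫ s in (0:ℝ)..t, rhs u z s

/-- the rank-one matrix `b ⬝ p` -/
def outer (b p : Fin 2 → ℝ) : Matrix (Fin 2) (Fin 2) ℝ :=
  Matrix.of (fun i j => b i * p j)

/-- view a real matrix as a complex one -/
def cM (A : Matrix (Fin 2) (Fin 2) ℝ) : Matrix (Fin 2) (Fin 2) ℂ :=
  A.map (fun r => (r : ℂ))

/-! The first coordinate is a flat output. Any twice differentiable `q` prescribes a solution
with `z = (q, q')` on `[0, ∞)`: the first equation `ż₁ = z₂` holds by construction and the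
second one is solved for the control, `u(t) = q''(t) - z₂(t - 1)`. It therefore suffices to
join `(q, q')(0) = y` to rest. The quartic `(α + (β + 3α) t) (1 - t)³` has the right data at
`0` and vanishes to third order at `1`, so freezing it after time `1` keeps it `C²`, and the
resulting solution vanishes on `[1, 2]`.

The pencil is singular because its first row vanishes: the first rows of `A₁` and `b` are zero. -/
theorem det_closedLoopPencil_eq_zero (pm1 p1 : Fin 2 → ℝ) (lam : ℂ) :
    (cM (A1 + outer bv p1) + lam • cM (outer bv pm1)).det = 0 :=
  det_eq_zero_of_row_eq_zero 0 fun j => by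
    fin_cases j <;> simp [cM, A1, outer, bv, vecHead, vecTail]

theorem hasDerivAt_comp_min_of_deriv_eq_zero {F : Type*} [NormedAddCommGroup F] [NormedSpace ℝ F]
    {f f' : ℝ → F} {a : ℝ} (hf : ∀ t, HasDerivAt f (f' t) t) (ha : f' a = 0) (t : ℝ) :
    HasDerivAt (fun s => f (min s a)) (f' (min t a)) t := by
  rcases lt_trichotomy t a with hlt | rfl | hgt
  · rw [min_eq_left hlt.le]
    refine (hf t).congr_of_eventuallyEq ?_
    filter_upwards [Iio_mem_nhds hlt] with s hs
    rw [min_eq_left hs.le]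
  · rw [min_self, ← hasDerivWithinAt_univ, ← Iic_union_Ici]
    refine HasDerivWithinAt.union ?_ ?_
    · exact (hf t).hasDerivWithinAt.congr (fun s hs => by rw [min_eq_left hs]) (by rw [min_self])
    · rw [ha]
      exact (hasDerivWithinAt_const t _ (f t)).congr (fun s hs => by rw [min_eq_right hs])
        (by rw [min_self])
  · rw [min_eq_right hgt.le, ha]
    refine (hasDerivAt_const t (f a)).congr_of_eventuallyEq ?_
    filter_upwards [Ioi_mem_nhds hgt] with s hs
    rw [min_eq_right hs.le]

theorem Continuous.memLp_restrict_Icc {E : Type*} [NormedAddCommGroup E] {f : ℝ → E}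
    (hf : Continuous f) (p : ENNReal) (a b : ℝ) : MemLp f p (volume.restrict (Icc a b)) := by
  obtain ⟨C, hC⟩ := isCompact_Icc.exists_bound_of_continuousOn hf.continuousOn
  exact MemLp.of_bound hf.aestronglyMeasurable C <|
    (ae_restrict_mem measurableSet_Icc).mono hC

theorem exists_steering_to_rest (α β : ℝ) :
    ∃ q q' q'' : ℝ → ℝ, (∀ t, HasDerivAt q (q' t) t) ∧ (∀ t, HasDerivAt q' (q'' t) t) ∧
      Continuous q'' ∧ q 0 = α ∧ q' 0 = β ∧ ∀ t, 1 ≤ t → q t = 0 ∧ q' t = 0 := by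
  set c := β + 3 * α with hc
  have hp : ∀ t, HasDerivAt (fun s => (α + c * s) * (1 - s) ^ 3)
      ((1 - t) ^ 2 * (β - 4 * c * t)) t := fun t =>
    ((((hasDerivAt_id' t).const_mul c).const_add α).fun_mul
      (((hasDerivAt_id' t).const_sub 1).fun_pow 3)).congr_deriv (by rw [hc]; push_cast; ring)
  have hp' : ∀ t, HasDerivAt (fun s => (1 - s) ^ 2 * (β - 4 * c * s))
      (6 * (1 - t) * (2 * c * t - 2 * α - β)) t := fun t =>
    ((((hasDerivAt_id' t).const_sub 1).fun_pow 2).fun_mul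
      (((hasDerivAt_id' t).const_mul (4 * c)).const_sub β)).congr_deriv
      (by rw [hc]; push_cast; ring)
  refine ⟨fun t => (α + c * min t 1) * (1 - min t 1) ^ 3,
    fun t => (1 - min t 1) ^ 2 * (β - 4 * c * min t 1),
    fun t => 6 * (1 - min t 1) * (2 * c * min t 1 - 2 * α - β),
    hasDerivAt_comp_min_of_deriv_eq_zero hp (by ring),
    hasDerivAt_comp_min_of_deriv_eq_zero hp' (by ring), by fun_prop, by simp, by simp [c],
    fun t ht => by simp [min_eq_right ht]⟩

def flatState (q q' : ℝ → ℝ) (t : ℝ) : R2 := !₂[q t, q' t]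

def flatTrajectory (z0 : ℝ → R2) (q q' : ℝ → ℝ) : ℝ → R2 :=
  (Iio 0).piecewise z0 (flatState q q')

def flatControl (z0 : ℝ → R2) (q q' q'' : ℝ → ℝ) (t : ℝ) : ℝ :=
  q'' t - flatTrajectory z0 q q' (t - 1) 1

section FlatOutput

variable {z0 : ℝ → R2} {q q' q'' : ℝ → ℝ}

theorem flatTrajectory_of_nonneg {t : ℝ} (ht : 0 ≤ t) :
    flatTrajectory z0 q q' t = flatState q q' t :=
  piecewise_eq_of_notMem _ _ _ (not_lt.2 ht)

theorem rhs_flatControl {t : ℝ} (ht : 0 ≤ t) :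
    rhs (flatControl z0 q q' q'') (flatTrajectory z0 q q') t = flatState q' q'' t := by
  ext i
  fin_cases i <;>
    simp [rhs, flatControl, flatTrajectory_of_nonneg ht, flatState, A1, A0, bv, mulVec,
      dotProduct, Fin.sum_univ_two]

theorem hasDerivAt_flatState (hq : ∀ t, HasDerivAt q (q' t) t)
    (hq' : ∀ t, HasDerivAt q' (q'' t) t) (t : ℝ) :
    HasDerivAt (flatState q q') (flatState q' q'' t) t := by
  have hpi : HasDerivAt (fun s => ![q s, q' s]) ![q' t, q'' t] t := by
    rw [hasDerivAt_pi]
    intro i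
    fin_cases i
    exacts [hq t, hq' t]
  exact (PiLp.continuousLinearEquiv 2 ℝ (fun _ : Fin 2 => ℝ)).symm.hasFDerivAt.comp_hasDerivAt t hpi

theorem continuous_flatState (hq : Continuous q) (hq' : Continuous q') :
    Continuous (flatState q q') :=
  (PiLp.continuousLinearEquiv 2 ℝ (fun _ : Fin 2 => ℝ)).symm.continuous.comp
    (continuous_pi fun i => by fin_cases i <;> assumption)

theorem isSolution_flatTrajectory (hq : ∀ t, HasDerivAt q (q' t) t)
    (hq' : ∀ t, HasDerivAt q' (q'' t) t) (hq'' : Continuous q'') {T : ℝ} (hT : 0 ≤ T) :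
    IsSolution T (flatState q q' 0) z0 (flatControl z0 q q' q'') (flatTrajectory z0 q q') := by
  have hcont : Continuous (flatState q' q'') :=
    continuous_flatState (continuous_iff_continuousAt.2 fun t => (hq' t).continuousAt) hq''
  refine ⟨(ae_restrict_mem measurableSet_Ioo).mono fun t ht => piecewise_eq_of_mem _ _ _ ht.2,
    (hcont.intervalIntegrable 0 T).congr fun s hs =>
      (rhs_flatControl (uIoc_of_le hT ▸ hs).1.le).symm,
    fun t ht => ?_⟩
  rw [flatTrajectory_of_nonneg ht.1,
    intervalIntegral.integral_congr fun s hs => rhs_flatControl (uIcc_of_le ht.1 ▸ hs).1,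
    intervalIntegral.integral_eq_sub_of_hasDerivAt (fun s _ => hasDerivAt_flatState hq hq' s)
      (hcont.intervalIntegrable 0 t)]
  abel

theorem memLp_flatTrajectory {p : ENNReal} (hz0 : MemLp z0 p (volume.restrict (Ioo (-1) 0)))
    (hq : Continuous q) (hq' : Continuous q') (T : ℝ) :
    MemLp (flatTrajectory z0 q q') p (volume.restrict (Ioo (-1) T)) := by
  refine MemLp.piecewise measurableSet_Iio (hz0.mono_measure ?_)
    (((continuous_flatState hq hq').memLp_restrict_Icc p 0 T).mono_measure ?_)
  · rw [Measure.restrict_restrict measurableSet_Iio]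
    exact Measure.restrict_mono_set _ fun t ht => ⟨ht.2.1, ht.1⟩
  · rw [Measure.restrict_restrict measurableSet_Iio.compl]
    exact Measure.restrict_mono_set _ fun t ht => ⟨not_lt.1 ht.1, ht.2.2.le⟩

theorem memLp_flatControl {p : ENNReal} (hz0 : MemLp z0 p (volume.restrict (Ioo (-1) 0)))
    (hq : Continuous q) (hq' : Continuous q') (hq'' : Continuous q'') (T : ℝ) :
    MemLp (flatControl z0 q q' q'') p (volume.restrict (Ioo 0 T)) := by
  have hshift : MeasurePreserving (· - 1) (volume.restrict (Ioo 0 T))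
      (volume.restrict (Ioo (-1) (T - 1))) := by
    have h := (measurePreserving_sub_right volume (1 : ℝ)).restrict_preimage
      (measurableSet_Ioo (a := -1) (b := T - 1))
    rwa [preimage_sub_const_Ioo, neg_add_cancel, sub_add_cancel] at h
  have hdelay : MemLp (fun t => flatTrajectory z0 q q' (t - 1) 1) p (volume.restrict (Ioo 0 T)) :=
    (EuclideanSpace.proj (1 : Fin 2) : R2 →L[ℝ] ℝ).comp_memLp'
      ((memLp_flatTrajectory hz0 hq hq' (T - 1)).comp_measurePreserving hshift)
  exact ((hq''.memLp_restrict_Icc p 0 T).mono_measure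
    (Measure.restrict_mono_set _ Ioo_subset_Icc_self)).sub hdelay

end FlatOutput

theorem stmt13 :
    -- (i) the closed-loop pencil `(A₁ + b p₁) + λ (b p₋₁)` is singular for every feedback:
    (∀ (pm1 p1 : Fin 2 → ℝ) (lam : ℂ),
      (cM (A1 + outer bv p1) + lam • cM (outer bv pm1)).det = 0) ∧
    -- (ii) yet the system is exactly null controllable at some time `T > 0`:
    (∃ T : ℝ, 0 < T ∧
      ∀ (y : R2) (z0 : ℝ → R2), MemLp z0 2 (volume.restrict (Ioo (-1:ℝ) 0)) →
        ∃ (u : ℝ → ℝ) (z : ℝ → R2),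
          MemLp u 2 (volume.restrict (Ioo (0:ℝ) T)) ∧
          IsSolution T y z0 u z ∧
          ∀ t ∈ Icc (T - 1) T, z t = 0) := by
  refine ⟨det_closedLoopPencil_eq_zero, 2, two_pos, fun y z0 hz0 => ?_⟩
  obtain ⟨q, q', q'', hq, hq', hq'', hq0, hq'0, hq_one⟩ := exists_steering_to_rest (y 0) (y 1)
  have hy : flatState q q' 0 = y := by
    ext i
    fin_cases i <;> simp [flatState, hq0, hq'0]
  refine ⟨flatControl z0 q q' q'', flatTrajectory z0 q q',
    memLp_flatControl hz0 (continuous_iff_continuousAt.2 fun t => (hq t).continuousAt)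
      (continuous_iff_continuousAt.2 fun t => (hq' t).continuousAt) hq'' 2,
    hy ▸ isSolution_flatTrajectory hq hq' hq'' zero_le_two, fun t ht => ?_⟩
  have h1 : 1 ≤ t := by linarith [ht.1]
  rw [flatTrajectory_of_nonneg (by linarith)]
  ext i
  fin_cases i <;> simp [flatState, hq_one t h1]
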